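/- (Asymptotics of the upper bound on the optimal tube function.) Define s(y) := 2·arcsinh(1/sinh(y/2)) for y > 0 and arccosh(t) := log(t + √(t² − 1)) for t ≥ 1. Then the function x ↦ √x · s(arccosh(cot((π/2)/(x+2)))) tends to 2·√π as x → ∞. In particular, the paper's upper bound s(arccosh(cot((π/2)/(|χ|+2)))) on the optimal tube width d_χ for embedded complex geodesic surfaces of Euler characteristic χ is asymptotically 2√π/√|χ| as |χ| → ∞. -/

import Mathlib

/-! With `t = cot θ`, the identity `cosh y = 1 + 2 sinh² (y / 2)` gives
`s (arccosh t) = 2 arsinh √(2 / (t - 1))`, and `2 / (cot θ - 1) = 2 sin θ / (cos θ - sin θ)`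
is `~ 2θ` as `θ → 0`. For `θ = (π/2)/(x+2)` this is `~ π / x`, and since `arsinh u ~ u` the
product `√x · s` is `~ 2 √x · √(π / x) = 2 √π`. -/

open Real Filter

/-- The projection radius function `s(y) = 2 arcsinh(1/sinh(y/2))`. -/
noncomputable def sfun (y : ℝ) : ℝ := 2 * Real.arsinh (1 / Real.sinh (y / 2))

/-- The inverse hyperbolic cosine `arccosh(t) = log(t + √(t²−1))`. -/
noncomputable def arccosh (t : ℝ) : ℝ := Real.log (t + Real.sqrt (t ^ 2 - 1))

open Topology

lemma arccosh_eq_arcosh : arccosh = arcosh := rfl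

lemma cosh_eq_one_add_two_mul_sinh_half_sq (y : ℝ) : cosh y = 1 + 2 * sinh (y / 2) ^ 2 := by
  rw [← mul_div_cancel₀ y (two_ne_zero' ℝ), cosh_two_mul, cosh_sq',
    mul_div_cancel_left₀ _ two_ne_zero]
  ring

lemma one_div_sinh_half_arcosh {t : ℝ} (ht : 1 < t) :
    1 / sinh (arcosh t / 2) = √(2 / (t - 1)) := by
  have hpos : 0 < sinh (arcosh t / 2) := sinh_pos_iff.2 (half_pos (arcosh_pos ht))
  have hsq : sinh (arcosh t / 2) ^ 2 = (t - 1) / 2 := by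
    have := cosh_eq_one_add_two_mul_sinh_half_sq (arcosh t)
    rw [cosh_arcosh ht.le] at this
    linarith
  rw [← sqrt_sq hpos.le, hsq, one_div, ← sqrt_inv, inv_div]

lemma sfun_arccosh {t : ℝ} (ht : 1 < t) :
    sfun (arccosh t) = 2 * arsinh √(2 / (t - 1)) := by
  rw [sfun, arccosh_eq_arcosh, one_div_sinh_half_arcosh ht]

lemma one_lt_cot_of_pos_of_lt_pi_div_four {θ : ℝ} (h0 : 0 < θ) (h1 : θ < π / 4) :
    1 < cot θ := by
  have htan : 0 < tan θ := tan_pos_of_pos_of_lt_pi_div_two h0 (by linarith [pi_pos])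
  have htan1 : tan θ < 1 := by
    rw [← tan_pi_div_four]
    exact tan_lt_tan_of_lt_of_lt_pi_div_two (by linarith) (by linarith [pi_pos]) h1
  rw [← inv_inv (cot θ), cot_inv_eq_tan]
  exact (one_lt_inv₀ htan).2 htan1

lemma two_div_cot_sub_one {θ : ℝ} (h : sin θ ≠ 0) :
    2 / (cot θ - 1) = 2 * sin θ / (cos θ - sin θ) := by
  rw [cot_eq_cos_div_sin, div_sub_one h, div_div_eq_mul_div]

lemma hasDerivAt_two_mul_sin_div_cos_sub_sin :
    HasDerivAt (fun θ => 2 * sin θ / (cos θ - sin θ)) 2 0 := by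
  simpa using ((hasDerivAt_sin 0).const_mul 2).fun_div
    ((hasDerivAt_cos 0).fun_sub (hasDerivAt_sin 0)) (by simp)

lemma tendsto_div_self_of_hasDerivAt_zero {f : ℝ → ℝ} {c : ℝ} (hf : HasDerivAt f c 0)
    (hf0 : f 0 = 0) : Tendsto (fun u => f u / u) (𝓝[≠] 0) (𝓝 c) := by
  refine (hasDerivAt_iff_tendsto_slope.1 hf).congr fun u => ?_
  simp [slope_def_field, hf0]

lemma tendsto_mul_comp_of_hasDerivAt_zero {α : Type*} {l : Filter α} {f : ℝ → ℝ} {c L : ℝ}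
    {a θ : α → ℝ} (hf : HasDerivAt f c 0) (hf0 : f 0 = 0) (hθ : Tendsto θ l (𝓝[≠] 0))
    (h : Tendsto (fun i => a i * θ i) l (𝓝 L)) :
    Tendsto (fun i => a i * f (θ i)) l (𝓝 (L * c)) := by
  refine (h.mul ((tendsto_div_self_of_hasDerivAt_zero hf hf0).comp hθ)).congr' ?_
  filter_upwards [hθ.eventually eventually_mem_nhdsWithin] with i (hi : θ i ≠ 0)
  simp only [Function.comp_apply]
  field_simp

lemma tendsto_sqrt_mul_arsinh_sqrt {α : Type*} {l : Filter α} {a v : α → ℝ} {L : ℝ}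
    (hv : Tendsto v l (𝓝[>] 0)) (h : Tendsto (fun i => a i * v i) l (𝓝 L)) :
    Tendsto (fun i => √(a i) * arsinh √(v i)) l (𝓝 √L) := by
  have hv_pos : ∀ᶠ i in l, 0 < v i := hv.eventually eventually_mem_nhdsWithin
  have hsqrt_v : Tendsto (fun i => √(v i)) l (𝓝[≠] 0) := by
    refine tendsto_nhdsWithin_iff.2 ⟨?_, hv_pos.mono fun i hi => (sqrt_pos.2 hi).ne'⟩
    exact (continuous_sqrt.tendsto' 0 0 sqrt_zero).comp (hv.mono_right nhdsWithin_le_nhds)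
  have hsqrt_mul : Tendsto (fun i => √(a i) * √(v i)) l (𝓝 √L) :=
    ((continuous_sqrt.tendsto L).comp h).congr' <|
      hv_pos.mono fun i hi => sqrt_mul' (a i) hi.le
  simpa using tendsto_mul_comp_of_hasDerivAt_zero (hasDerivAt_arsinh 0) arsinh_zero hsqrt_v
    hsqrt_mul

lemma tendsto_div_add_atTop_nhdsGT {c : ℝ} (hc : 0 < c) (b : ℝ) :
    Tendsto (fun x => c / (x + b)) atTop (𝓝[>] 0) := by
  refine tendsto_nhdsWithin_iff.2 ⟨?_, ?_⟩
  · exact tendsto_const_nhds.div_atTop (tendsto_atTop_add_const_right _ b tendsto_id)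
  · filter_upwards [eventually_gt_atTop (-b)] with x hx
    exact div_pos hc (by linarith)

lemma tendsto_mul_div_add_atTop (c b : ℝ) :
    Tendsto (fun x => x * (c / (x + b))) atTop (𝓝 c) := by
  have h : Tendsto (fun x => c - b * (c / (x + b))) atTop (𝓝 (c - b * 0)) :=
    tendsto_const_nhds.sub <| (tendsto_const_nhds.div_atTop
      (tendsto_atTop_add_const_right _ b tendsto_id)).const_mul b
  rw [mul_zero, sub_zero] at h
  refine h.congr' ?_
  filter_upwards [eventually_gt_atTop (-b)] with x hx
  have : x + b ≠ 0 := by linarith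
  field_simp
  ring

/-- Asymptotics of the upper bound on the optimal tube function:
`√x · s(arccosh(cot((π/2)/(x+2)))) → 2√π` as `x → ∞`. -/
theorem optimal_tube_upper_bound_asymptotics :
    Tendsto (fun x : ℝ =>
        Real.sqrt x * sfun (arccosh (Real.cot ((Real.pi / 2) / (x + 2)))))
      atTop (nhds (2 * Real.sqrt Real.pi)) := by
  set θ : ℝ → ℝ := fun x => π / 2 / (x + 2)
  have hθ : Tendsto θ atTop (𝓝[>] 0) := tendsto_div_add_atTop_nhdsGT (by positivity) 2
  have hθ_small : ∀ᶠ x in atTop, θ x ∈ Set.Ioo 0 (π / 4) :=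
    hθ (Ioo_mem_nhdsGT (by positivity))
  have hcot : ∀ᶠ x in atTop, 1 < cot (θ x) :=
    hθ_small.mono fun x hx => one_lt_cot_of_pos_of_lt_pi_div_four hx.1 hx.2
  set g : ℝ → ℝ := fun θ => 2 * sin θ / (cos θ - sin θ)
  set v : ℝ → ℝ := fun x => 2 / (cot (θ x) - 1)
  have hv_eq : (fun x => g (θ x)) =ᶠ[atTop] v := hθ_small.mono fun x hx =>
    (two_div_cot_sub_one (sin_pos_of_pos_of_lt_pi hx.1 (by linarith [hx.2, pi_pos])).ne').symm
  have hv : Tendsto v atTop (𝓝[>] 0) := by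
    refine tendsto_nhdsWithin_iff.2 ⟨?_, hcot.mono fun x hx => div_pos two_pos (sub_pos.2 hx)⟩
    refine Tendsto.congr' hv_eq ?_
    simpa [g, Function.comp_def] using
      hasDerivAt_two_mul_sin_div_cos_sub_sin.continuousAt.tendsto.comp
        (hθ.mono_right nhdsWithin_le_nhds)
  have hxv : Tendsto (fun x => x * v x) atTop (𝓝 π) := by
    have h := tendsto_mul_comp_of_hasDerivAt_zero hasDerivAt_two_mul_sin_div_cos_sub_sin
      (by simp) (hθ.mono_right (nhdsGT_le_nhdsNE 0)) (tendsto_mul_div_add_atTop (π / 2) 2)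
    rw [div_mul_cancel₀ _ two_ne_zero] at h
    exact h.congr' (hv_eq.mono fun x hx => congrArg (x * ·) hx)
  refine ((tendsto_sqrt_mul_arsinh_sqrt hv hxv).const_mul 2).congr' ?_
  filter_upwards [hcot] with x hx
  rw [sfun_arccosh hx]
  ring
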